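/- arXiv:1508.03109 — 2 statements merged into one kernel-verified Lean document; each statement's English description precedes it below -/
import Mathlib

section
/- Let f : [a,b] → (0,∞) be a continuous geometrically convex function, where 0 < a < b. Then f(√(ab)) ≤ √(f(a^(3/4) b^(1/4)) · f(a^(1/4) b^(3/4))) ≤ exp( (1/(log b − log a)) ∫_a^b (log f(t))/t dt ) ≤ √(f(√(ab))) · f(a)^(1/4) · f(b)^(1/4) ≤ √(f(a) · f(b)). -/
/-!
Writing `a = exp A`, `b = exp B`, geometric convexity of `f` on `[a, b]` is convexity of
`g = log ∘ f ∘ exp` on `[A, B]`, and the substitution `t = exp s` turns the middle term into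
`exp` of the mean value of `g`. After taking logarithms the chain is the Hermite–Hadamard
inequality for `g` applied on each half of `[A, B]` and added up, flanked by two instances of
midpoint convexity. Both Hermite–Hadamard bounds come from integrating the symmetrization
`(g x + g (p + q - x)) / 2`, which lies between `g` at the midpoint and the mean of the endpoint
values.
-/

open Set Real intervalIntegral
open MeasureTheory (volume)

section HermiteHadamard

variable {g : ℝ → ℝ} {s : Set ℝ} {p q : ℝ}

theorem ConvexOn.map_add_div_two_le (hc : ConvexOn ℝ s g) {x y : ℝ} (hx : x ∈ s)
    (hy : y ∈ s) :
    g ((x + y) / 2) ≤ (g x + g y) / 2 := by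
  have h := hc.2 hx hy (by norm_num : (0 : ℝ) ≤ 1 / 2) (by norm_num : (0 : ℝ) ≤ 1 / 2)
    (by norm_num)
  simp only [smul_eq_mul] at h
  rw [show (1 / 2 : ℝ) * x + 1 / 2 * y = (x + y) / 2 by ring] at h
  linarith

theorem ConvexOn.map_add_map_reflect_le (hc : ConvexOn ℝ (Icc p q) g) {x : ℝ}
    (hx : x ∈ Icc p q) : g x + g (p + q - x) ≤ g p + g q := by
  rcases hx.1.eq_or_lt with rfl | hpx
  · simp
  have hpq : 0 < q - p := by linarith [hx.2]
  have hp : p ∈ Icc p q := left_mem_Icc.2 (by linarith)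
  have hq : q ∈ Icc p q := right_mem_Icc.2 (by linarith)
  have hl : 0 ≤ (q - x) / (q - p) := div_nonneg (by linarith [hx.2]) hpq.le
  have hr : 0 ≤ (x - p) / (q - p) := div_nonneg (by linarith) hpq.le
  have hsum : (q - x) / (q - p) + (x - p) / (q - p) = 1 := by field_simp; ring
  have h₁ := hc.2 hp hq hl hr hsum
  have h₂ := hc.2 hp hq hr hl (by rw [add_comm, hsum])
  have e₁ : (q - x) / (q - p) * p + (x - p) / (q - p) * q = x := by field_simp; ring
  have e₂ : (x - p) / (q - p) * p + (q - x) / (q - p) * q = p + q - x := by field_simp; ring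
  simp only [smul_eq_mul, e₁, e₂] at h₁ h₂
  linear_combination h₁ + h₂ + (g p + g q) * hsum

theorem IntervalIntegrable.comp_reflect (hg : IntervalIntegrable g volume p q) :
    IntervalIntegrable (fun x => g (p + q - x)) volume p q := by
  simpa using (hg.comp_sub_left (p + q)).symm

theorem integral_eq_integral_add_reflect_div_two (hg : IntervalIntegrable g volume p q) :
    ∫ x in p..q, g x = ∫ x in p..q, (g x + g (p + q - x)) / 2 := by
  have hrefl : ∫ x in p..q, g (p + q - x) = ∫ x in p..q, g x := by
    simp [integral_comp_sub_left]
  rw [integral_div, integral_add hg hg.comp_reflect, hrefl]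
  ring

theorem ConvexOn.mul_map_midpoint_le_integral (hpq : p ≤ q) (hc : ConvexOn ℝ (Icc p q) g)
    (hcont : ContinuousOn g (Icc p q)) :
    (q - p) * g ((p + q) / 2) ≤ ∫ x in p..q, g x := by
  have hg : IntervalIntegrable g volume p q :=
    (hcont.mono (uIcc_of_le hpq).subset).intervalIntegrable
  rw [integral_eq_integral_add_reflect_div_two hg]
  calc (q - p) * g ((p + q) / 2) = ∫ _ in p..q, g ((p + q) / 2) := by simp
    _ ≤ ∫ x in p..q, (g x + g (p + q - x)) / 2 :=
        integral_mono_on hpq intervalIntegrable_const ?_ fun x hx => ?_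
  · exact (hg.add hg.comp_reflect).div_const 2
  · have hx' : p + q - x ∈ Icc p q := ⟨by linarith [hx.2], by linarith [hx.1]⟩
    simpa using hc.map_add_div_two_le hx hx'

theorem ConvexOn.integral_le_mul_add_div_two (hpq : p ≤ q) (hc : ConvexOn ℝ (Icc p q) g)
    (hcont : ContinuousOn g (Icc p q)) :
    ∫ x in p..q, g x ≤ (q - p) * ((g p + g q) / 2) := by
  have hg : IntervalIntegrable g volume p q :=
    (hcont.mono (uIcc_of_le hpq).subset).intervalIntegrable
  rw [integral_eq_integral_add_reflect_div_two hg]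
  calc ∫ x in p..q, (g x + g (p + q - x)) / 2 ≤ ∫ _ in p..q, (g p + g q) / 2 :=
        integral_mono_on hpq ?_ intervalIntegrable_const fun x hx => ?_
    _ = (q - p) * ((g p + g q) / 2) := by simp; ring
  · exact (hg.add hg.comp_reflect).div_const 2
  · linarith [hc.map_add_map_reflect_le hx]

theorem ConvexOn.map_quarter_points_le_average (hpq : p < q) (hc : ConvexOn ℝ (Icc p q) g)
    (hcont : ContinuousOn g (Icc p q)) :
    (g ((3 * p + q) / 4) + g ((p + 3 * q) / 4)) / 2 ≤ (∫ x in p..q, g x) / (q - p) := by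
  have hm : (p + q) / 2 ∈ Icc p q := ⟨by linarith, by linarith⟩
  have hl : Icc p ((p + q) / 2) ⊆ Icc p q := Icc_subset_Icc_right hm.2
  have hr : Icc ((p + q) / 2) q ⊆ Icc p q := Icc_subset_Icc_left hm.1
  have h₁ := (hc.subset hl (convex_Icc _ _)).mul_map_midpoint_le_integral hm.1 (hcont.mono hl)
  have h₂ := (hc.subset hr (convex_Icc _ _)).mul_map_midpoint_le_integral hm.2 (hcont.mono hr)
  rw [show (p + (p + q) / 2) / 2 = (3 * p + q) / 4 by ring] at h₁
  rw [show ((p + q) / 2 + q) / 2 = (p + 3 * q) / 4 by ring] at h₂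
  rw [le_div_iff₀ (by linarith), ← integral_add_adjacent_intervals
    (hcont.mono (uIcc_subset_Icc (left_mem_Icc.2 hpq.le) hm)).intervalIntegrable
    (hcont.mono (uIcc_subset_Icc hm (right_mem_Icc.2 hpq.le))).intervalIntegrable]
  linear_combination h₁ + h₂

theorem ConvexOn.average_le_map_midpoint_add (hpq : p < q) (hc : ConvexOn ℝ (Icc p q) g)
    (hcont : ContinuousOn g (Icc p q)) :
    (∫ x in p..q, g x) / (q - p) ≤ g ((p + q) / 2) / 2 + (g p + g q) / 4 := by
  have hm : (p + q) / 2 ∈ Icc p q := ⟨by linarith, by linarith⟩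
  have hl : Icc p ((p + q) / 2) ⊆ Icc p q := Icc_subset_Icc_right hm.2
  have hr : Icc ((p + q) / 2) q ⊆ Icc p q := Icc_subset_Icc_left hm.1
  have h₁ := (hc.subset hl (convex_Icc _ _)).integral_le_mul_add_div_two hm.1 (hcont.mono hl)
  have h₂ := (hc.subset hr (convex_Icc _ _)).integral_le_mul_add_div_two hm.2 (hcont.mono hr)
  rw [div_le_iff₀ (by linarith), ← integral_add_adjacent_intervals
    (hcont.mono (uIcc_subset_Icc (left_mem_Icc.2 hpq.le) hm)).intervalIntegrable
    (hcont.mono (uIcc_subset_Icc hm (right_mem_Icc.2 hpq.le))).intervalIntegrable]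
  linear_combination h₁ + h₂

theorem ConvexOn.refined_hermiteHadamard (hpq : p < q) (hc : ConvexOn ℝ (Icc p q) g)
    (hcont : ContinuousOn g (Icc p q)) :
    g ((p + q) / 2) ≤ (g ((3 * p + q) / 4) + g ((p + 3 * q) / 4)) / 2 ∧
    (g ((3 * p + q) / 4) + g ((p + 3 * q) / 4)) / 2 ≤ (∫ x in p..q, g x) / (q - p) ∧
    (∫ x in p..q, g x) / (q - p) ≤ g ((p + q) / 2) / 2 + (g p + g q) / 4 ∧
    g ((p + q) / 2) / 2 + (g p + g q) / 4 ≤ (g p + g q) / 2 := by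
  have hquarters := hc.map_add_div_two_le (x := (3 * p + q) / 4) (y := (p + 3 * q) / 4)
    ⟨by linarith, by linarith⟩ ⟨by linarith, by linarith⟩
  rw [show ((3 * p + q) / 4 + (p + 3 * q) / 4) / 2 = (p + q) / 2 by ring] at hquarters
  have hends := hc.map_add_div_two_le (left_mem_Icc.2 hpq.le) (right_mem_Icc.2 hpq.le)
  exact ⟨hquarters, hc.map_quarter_points_le_average hpq hcont,
    hc.average_le_map_midpoint_add hpq hcont, by linarith⟩

end HermiteHadamard

def GeometricallyConvexOn (s : Set ℝ) (f : ℝ → ℝ) : Prop :=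
  ∀ x ∈ s, ∀ y ∈ s, ∀ l ∈ Icc (0 : ℝ) 1,
    f (x ^ l * y ^ (1 - l)) ≤ f x ^ l * f y ^ (1 - l)

theorem exp_mem_Icc_exp_iff {x A B : ℝ} : exp x ∈ Icc (exp A) (exp B) ↔ x ∈ Icc A B := by
  simp

theorem GeometricallyConvexOn.convexOn_log_comp_exp {f : ℝ → ℝ} {A B : ℝ}
    (hf : GeometricallyConvexOn (Icc (exp A) (exp B)) f)
    (hpos : ∀ x ∈ Icc (exp A) (exp B), 0 < f x) :
    ConvexOn ℝ (Icc A B) (fun s => log (f (exp s))) := by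
  refine ⟨convex_Icc A B, fun s hs t ht μ ν hμ hν hμν => ?_⟩
  obtain rfl : ν = 1 - μ := by linarith
  have hs' := exp_mem_Icc_exp_iff.2 hs
  have ht' := exp_mem_Icc_exp_iff.2 ht
  have hexp : exp (μ • s + (1 - μ) • t) = exp s ^ μ * exp t ^ (1 - μ) := by
    rw [smul_eq_mul, smul_eq_mul, exp_add, mul_comm μ, mul_comm (1 - μ), exp_mul, exp_mul]
  have hmem : exp s ^ μ * exp t ^ (1 - μ) ∈ Icc (exp A) (exp B) := by
    rw [← hexp]; exact exp_mem_Icc_exp_iff.2 ((convex_Icc A B) hs ht hμ hν (by ring))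
  calc log (f (exp (μ • s + (1 - μ) • t)))
      ≤ log (f (exp s) ^ μ * f (exp t) ^ (1 - μ)) :=
        log_le_log (hexp ▸ hpos _ hmem) (hexp ▸ hf _ hs' _ ht' μ ⟨hμ, by linarith⟩)
    _ = μ • log (f (exp s)) + (1 - μ) • log (f (exp t)) := by
        rw [log_mul (rpow_pos_of_pos (hpos _ hs') μ).ne' (rpow_pos_of_pos (hpos _ ht') _).ne',
          log_rpow (hpos _ hs'), log_rpow (hpos _ ht'), smul_eq_mul, smul_eq_mul]

theorem integral_div_self_eq_integral_comp_exp {h : ℝ → ℝ} {A B : ℝ} (hAB : A ≤ B)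
    (hh : ContinuousOn h (Icc (exp A) (exp B))) :
    ∫ t in exp A..exp B, h t / t = ∫ s in A..B, h (exp s) := by
  have himage : exp '' uIcc A B ⊆ Icc (exp A) (exp B) := by
    rintro _ ⟨s, hs, rfl⟩
    exact exp_mem_Icc_exp_iff.2 (uIcc_of_le hAB ▸ hs)
  have hcont : ContinuousOn (fun t => h t / t) (exp '' uIcc A B) :=
    (hh.mono himage).div continuousOn_id fun t ⟨s, _, hs⟩ => hs ▸ (exp_pos s).ne'
  rw [← integral_comp_mul_deriv' (fun s _ => hasDerivAt_exp s) continuous_exp.continuousOn hcont]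
  refine integral_congr fun s _ => ?_
  simp [(exp_pos s).ne']

/-- Refined Hermite–Hadamard chain for a continuous geometrically convex function
`f : [a,b] → (0,∞)`, `0 < a < b`. -/
theorem stmt_5 (a b : ℝ) (ha : 0 < a) (hab : a < b) (f : ℝ → ℝ)
    (hfpos : ∀ x ∈ Set.Icc a b, 0 < f x) (hfcont : ContinuousOn f (Set.Icc a b))
    (hgc : ∀ x ∈ Set.Icc a b, ∀ y ∈ Set.Icc a b, ∀ l ∈ Set.Icc (0 : ℝ) 1,
      f (x ^ l * y ^ (1 - l)) ≤ f x ^ l * f y ^ (1 - l)) :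
    f (Real.sqrt (a * b)) ≤
      Real.sqrt (f (a ^ (3 / 4 : ℝ) * b ^ (1 / 4 : ℝ)) *
        f (a ^ (1 / 4 : ℝ) * b ^ (3 / 4 : ℝ))) ∧
    Real.sqrt (f (a ^ (3 / 4 : ℝ) * b ^ (1 / 4 : ℝ)) *
        f (a ^ (1 / 4 : ℝ) * b ^ (3 / 4 : ℝ))) ≤
      Real.exp ((1 / (Real.log b - Real.log a)) * ∫ t in a..b, Real.log (f t) / t) ∧
    Real.exp ((1 / (Real.log b - Real.log a)) * ∫ t in a..b, Real.log (f t) / t) ≤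
      Real.sqrt (f (Real.sqrt (a * b))) * f a ^ (1 / 4 : ℝ) * f b ^ (1 / 4 : ℝ) ∧
    Real.sqrt (f (Real.sqrt (a * b))) * f a ^ (1 / 4 : ℝ) * f b ^ (1 / 4 : ℝ) ≤
      Real.sqrt (f a * f b) := by
  obtain ⟨A, rfl⟩ : ∃ A, exp A = a := ⟨log a, exp_log ha⟩
  obtain ⟨B, rfl⟩ : ∃ B, exp B = b := ⟨log b, exp_log (ha.trans hab)⟩
  have hAB : A < B := exp_lt_exp.1 hab
  set g : ℝ → ℝ := fun s => log (f (exp s))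
  have hconv : ConvexOn ℝ (Icc A B) g := GeometricallyConvexOn.convexOn_log_comp_exp hgc hfpos
  have hcont : ContinuousOn g (Icc A B) :=
    (hfcont.comp continuous_exp.continuousOn fun s hs => exp_mem_Icc_exp_iff.2 hs).log
      fun s hs => (hfpos _ (exp_mem_Icc_exp_iff.2 hs)).ne'
  have hf : ∀ s ∈ Icc A B, f (exp s) = exp (g s) := fun s hs =>
    (exp_log (hfpos _ (exp_mem_Icc_exp_iff.2 hs))).symm
  have hI : ∫ t in exp A..exp B, log (f t) / t = ∫ s in A..B, g s :=
    integral_div_self_eq_integral_comp_exp hAB.le (hfcont.log fun x hx => (hfpos x hx).ne')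
  have hmid : sqrt (exp A * exp B) = exp ((A + B) / 2) := by rw [← exp_add, exp_half]
  have hq₁ : exp A ^ (3 / 4 : ℝ) * exp B ^ (1 / 4 : ℝ) = exp ((3 * A + B) / 4) := by
    rw [← exp_mul, ← exp_mul, ← exp_add]; ring_nf
  have hq₂ : exp A ^ (1 / 4 : ℝ) * exp B ^ (3 / 4 : ℝ) = exp ((A + 3 * B) / 4) := by
    rw [← exp_mul, ← exp_mul, ← exp_add]; ring_nf
  have hm : (A + B) / 2 ∈ Icc A B := ⟨by linarith, by linarith⟩
  rw [hmid, hq₁, hq₂, hI, log_exp, log_exp, hf _ hm, hf _ ⟨by linarith, by linarith⟩,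
    hf _ ⟨by linarith, by linarith⟩, hf _ (left_mem_Icc.2 hAB.le),
    hf _ (right_mem_Icc.2 hAB.le)]
  simp only [← exp_add, ← exp_mul, ← exp_half, exp_le_exp, one_div_mul_eq_div]
  obtain ⟨h₁, h₂, h₃, h₄⟩ := hconv.refined_hermiteHadamard hAB hcont
  exact ⟨h₁, h₂, by linarith, by linarith⟩
end

section
/- Let P be a polynomial with real non-negative coefficients. Then P is geometrically convex on (0,∞); that is, P(a^λ b^(1−λ)) ≤ P(a)^λ · P(b)^(1−λ) for all a, b > 0 and all λ ∈ [0,1]. -/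
/-!
A monomial `c * x ^ n` with `c ≥ 0` turns weighted geometric means into weighted geometric
means, so it is geometrically convex with equality. Hölder's inequality with exponents
`1/λ` and `1/(1-λ)` shows that a finite sum of geometrically convex functions is again
geometrically convex, and a polynomial with non-negative coefficients is such a sum.
-/

open Finset Set

def GeomConvexOn (s : Set ℝ) (f : ℝ → ℝ) : Prop :=
  (∀ x ∈ s, 0 ≤ f x) ∧ ∀ ⦃a⦄, a ∈ s → ∀ ⦃b⦄, b ∈ s → ∀ ⦃l : ℝ⦄, 0 ≤ l → l ≤ 1 →
    f (a ^ l * b ^ (1 - l)) ≤ f a ^ l * f b ^ (1 - l)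

theorem Real.sum_rpow_mul_rpow_one_sub_le {ι : Type*} (s : Finset ι) {f g : ι → ℝ}
    (hf : ∀ i ∈ s, 0 ≤ f i) (hg : ∀ i ∈ s, 0 ≤ g i) {l : ℝ} (hl₀ : 0 ≤ l) (hl₁ : l ≤ 1) :
    ∑ i ∈ s, f i ^ l * g i ^ (1 - l) ≤ (∑ i ∈ s, f i) ^ l * (∑ i ∈ s, g i) ^ (1 - l) := by
  rcases hl₀.eq_or_lt with rfl | hl₀
  · simp
  rcases hl₁.eq_or_lt with rfl | hl₁
  · simp
  have holder := Real.inner_le_Lp_mul_Lq_of_nonneg s (Real.HolderConjugate.inv_one_sub_inv hl₀ hl₁)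
    (fun i hi => Real.rpow_nonneg (hf i hi) l) (fun i hi => Real.rpow_nonneg (hg i hi) (1 - l))
  rwa [sum_congr rfl fun i hi => Real.rpow_rpow_inv (hf i hi) hl₀.ne',
    sum_congr rfl fun i hi => Real.rpow_rpow_inv (hg i hi) (sub_pos.2 hl₁).ne', one_div,
    one_div, inv_inv, inv_inv] at holder

theorem GeomConvexOn.sum {ι : Type*} {t : Finset ι} {s : Set ℝ} {f : ι → ℝ → ℝ}
    (hf : ∀ i ∈ t, GeomConvexOn s (f i)) : GeomConvexOn s fun x => ∑ i ∈ t, f i x := by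
  refine ⟨fun x hx => sum_nonneg fun i hi => (hf i hi).1 x hx, fun a ha b hb l hl₀ hl₁ => ?_⟩
  calc ∑ i ∈ t, f i (a ^ l * b ^ (1 - l))
      ≤ ∑ i ∈ t, f i a ^ l * f i b ^ (1 - l) := sum_le_sum fun i hi => (hf i hi).2 ha hb hl₀ hl₁
    _ ≤ (∑ i ∈ t, f i a) ^ l * (∑ i ∈ t, f i b) ^ (1 - l) :=
      Real.sum_rpow_mul_rpow_one_sub_le t (fun i hi => (hf i hi).1 a ha)
        (fun i hi => (hf i hi).1 b hb) hl₀ hl₁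

theorem Real.mul_rpow_mul_rpow_one_sub_pow {a b c : ℝ} (ha : 0 ≤ a) (hb : 0 ≤ b) (hc : 0 ≤ c)
    (l : ℝ) (n : ℕ) :
    c * (a ^ l * b ^ (1 - l)) ^ n = (c * a ^ n) ^ l * (c * b ^ n) ^ (1 - l) := by
  have hc' : c ^ l * c ^ (1 - l) = c := by
    rw [← Real.rpow_add' hc (by norm_num), add_sub_cancel, Real.rpow_one]
  rw [Real.mul_rpow hc (pow_nonneg ha n), Real.mul_rpow hc (pow_nonneg hb n), mul_mul_mul_comm,
    hc', mul_pow, Real.rpow_pow_comm ha, Real.rpow_pow_comm hb]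

theorem geomConvexOn_const_mul_pow {c : ℝ} (hc : 0 ≤ c) (n : ℕ) :
    GeomConvexOn (Ici 0) fun x => c * x ^ n :=
  ⟨fun _ hx => mul_nonneg hc (pow_nonneg hx n), fun _ ha _ hb l _ _ =>
    (Real.mul_rpow_mul_rpow_one_sub_pow ha hb hc l n).le⟩

theorem Polynomial.geomConvexOn_eval {P : Polynomial ℝ} (hP : ∀ i, 0 ≤ P.coeff i) :
    GeomConvexOn (Ici 0) fun x => P.eval x := by
  simp_rw [Polynomial.eval_eq_sum_range]
  exact GeomConvexOn.sum fun i _ => geomConvexOn_const_mul_pow (hP i) i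

/-- Every polynomial with non-negative real coefficients is geometrically convex
on `(0,∞)`. -/
theorem stmt_6 (P : Polynomial ℝ) (hP : ∀ i, 0 ≤ P.coeff i) :
    ∀ a b : ℝ, 0 < a → 0 < b → ∀ l ∈ Set.Icc (0 : ℝ) 1,
      P.eval (a ^ l * b ^ (1 - l)) ≤ P.eval a ^ l * P.eval b ^ (1 - l) :=
  fun _ _ ha hb _ hl => (Polynomial.geomConvexOn_eval hP).2 ha.le hb.le hl.1 hl.2
end
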